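/- arXiv:2404.02621 — 4 statements merged into one kernel-verified Lean document; each statement's English description precedes it below -/
import Mathlib

section
/- For a symmetric positive definite matrix Θ and a symmetric positive definite matrix Σ̂ with smallest eigenvalue γ > 0, the function value satisfies −log det(Θ) + tr(Σ̂Θ) ≥ −N log(‖Θ‖₂) + γ ‖Θ‖₂, where ‖Θ‖₂ is the largest eigenvalue of Θ. -/
/-!
Every eigenvalue of `Θ` lies in `(0, λ_max]`, so `log det Θ ≤ N log λ_max`. Since `Σ̂ - γ I` is
positive semidefinite and the trace of a product of positive semidefinite matrices is nonnegative,
`tr (Σ̂ Θ) ≥ γ tr Θ ≥ γ λ_max`.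
-/

open Matrix

namespace Matrix

variable {n : Type*} [Fintype n] [DecidableEq n]

section LoewnerOrder

open scoped MatrixOrder ComplexOrder

variable {𝕜 : Type*} [RCLike 𝕜]

lemma IsHermitian.algebraMap_le_iff_le_eigenvalues {A : Matrix n n 𝕜} (hA : A.IsHermitian)
    (c : ℝ) : algebraMap ℝ (Matrix n n 𝕜) c ≤ A ↔ ∀ i, c ≤ hA.eigenvalues i := by
  rw [algebraMap_le_iff_le_spectrum hA.isSelfAdjoint, hA.spectrum_real_eq_range_eigenvalues]
  simp

lemma PosSemidef.trace_mul_nonneg {P A : Matrix n n 𝕜} (hP : P.PosSemidef) (hA : A.PosSemidef) :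
    0 ≤ (P * A).trace := by
  obtain ⟨B, rfl⟩ := CStarAlgebra.nonneg_iff_eq_star_mul_self.mp hP.nonneg
  rw [mul_assoc, trace_mul_comm, star_eq_conjTranspose]
  exact (hA.mul_mul_conjTranspose_same B).trace_nonneg

lemma IsHermitian.iInf_eigenvalues_mul_trace_le_trace_mul {S A : Matrix n n ℝ}
    (hS : S.IsHermitian) (hA : A.PosSemidef) :
    (⨅ i, hS.eigenvalues i) * A.trace ≤ (S * A).trace := by
  have hle : algebraMap ℝ (Matrix n n ℝ) (⨅ i, hS.eigenvalues i) ≤ S :=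
    (hS.algebraMap_le_iff_le_eigenvalues _).mpr fun i => ciInf_le (Finite.bddBelow_range _) i
  have hnonneg := (Matrix.le_iff.mp hle).trace_mul_nonneg hA
  rw [Algebra.algebraMap_eq_smul_one, sub_mul, trace_sub, smul_mul, one_mul, trace_smul]
    at hnonneg
  simpa [sub_nonneg] using hnonneg

end LoewnerOrder

lemma PosSemidef.iSup_eigenvalues_le_trace {A : Matrix n n ℝ} (hA : A.PosSemidef) :
    ⨆ i, hA.1.eigenvalues i ≤ A.trace := by
  rw [hA.1.trace_eq_sum_eigenvalues]
  refine Real.iSup_le (fun i => ?_) (Finset.sum_nonneg fun i _ => hA.eigenvalues_nonneg i)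
  simpa using Finset.single_le_sum (fun j _ => hA.eigenvalues_nonneg j) (Finset.mem_univ i)

lemma PosDef.log_det_le_card_mul_log_iSup_eigenvalues {A : Matrix n n ℝ} (hA : A.PosDef) :
    Real.log A.det ≤ Fintype.card n * Real.log (⨆ i, hA.1.eigenvalues i) := by
  rw [hA.1.det_eq_prod_eigenvalues, RCLike.ofReal_real_eq_id]
  simp only [id]
  rw [Real.log_prod fun i _ => (hA.eigenvalues_pos i).ne']
  calc ∑ i, Real.log (hA.1.eigenvalues i) ≤ ∑ _i : n, Real.log (⨆ j, hA.1.eigenvalues j) :=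
        Finset.sum_le_sum fun i _ =>
          Real.log_le_log (hA.eigenvalues_pos i) (le_ciSup (Finite.bddAbove_range _) i)
    _ = Fintype.card n * Real.log (⨆ j, hA.1.eigenvalues j) := by simp

end Matrix

theorem neg_logdet_plus_trace_lower_bound_general {N : ℕ}
    (Θ Sig : Matrix (Fin N) (Fin N) ℝ)
    (hΘ : Θ.IsHermitian) (hΘpd : Θ.PosDef)
    (hSig : Sig.IsHermitian) (hSigpd : Sig.PosDef)
    (γ : ℝ) (hγ : γ = ⨅ i : Fin N, hSig.eigenvalues i) :
    -(N : ℝ) * Real.log (⨆ i : Fin N, hΘ.eigenvalues i)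
        + γ * (⨆ i : Fin N, hΘ.eigenvalues i)
      ≤ -Real.log Θ.det + (Sig * Θ).trace := by
  have hγ_nonneg : 0 ≤ γ := hγ ▸ Real.iInf_nonneg fun i => (hSigpd.eigenvalues_pos i).le
  have hlog_det : Real.log Θ.det ≤ N * Real.log (⨆ i, hΘ.eigenvalues i) := by
    simpa using hΘpd.log_det_le_card_mul_log_iSup_eigenvalues
  have hsup_le_trace : ⨆ i, hΘ.eigenvalues i ≤ Θ.trace :=
    hΘpd.posSemidef.iSup_eigenvalues_le_trace
  have htrace : γ * Θ.trace ≤ (Sig * Θ).trace :=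
    hγ ▸ hSig.iInf_eigenvalues_mul_trace_le_trace_mul hΘpd.posSemidef
  linarith [mul_le_mul_of_nonneg_left hsup_le_trace hγ_nonneg]

theorem neg_logdet_plus_trace_lower_bound {N : ℕ} [NeZero N]
    (Θ Sig : Matrix (Fin N) (Fin N) ℝ)
    (hΘ : Θ.IsHermitian) (hΘpd : Θ.PosDef)
    (hSig : Sig.IsHermitian) (hSigpd : Sig.PosDef)
    (γ : ℝ) (hγ : γ = ⨅ i : Fin N, hSig.eigenvalues i) :
    -(N : ℝ) * Real.log (⨆ i : Fin N, hΘ.eigenvalues i)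
        + γ * (⨆ i : Fin N, hΘ.eigenvalues i)
      ≤ -Real.log Θ.det + (Sig * Θ).trace :=
  neg_logdet_plus_trace_lower_bound_general Θ Sig hΘ hΘpd hSig hSigpd γ hγ
end

section
/- Let a ∈ ℝ^N and fix index j. If Σ_{i≠j} max(a_i, 0) ≥ 1, then the vector x̂ with x̂_j = 0 and x̂_i = max(a_i, 0) for i ≠ j minimizes (1/2)‖x − a‖² over the set {x : xᵀ1 ≥ 1, x_j = 0, x_i ≥ 0 for i ≠ j}. -/
open Finset

theorem simplex_like_projection_case1 {N : ℕ} (a : Fin N → ℝ) (j : Fin N)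
    (hsum : 1 ≤ ∑ i ∈ univ.erase j, max (a i) 0)
    (xhat : Fin N → ℝ)
    (hxhat : xhat = fun i => if i = j then 0 else max (a i) 0) :
    (1 ≤ ∑ i, xhat i) ∧ xhat j = 0 ∧ (∀ i, i ≠ j → 0 ≤ xhat i) ∧
      ∀ x : Fin N → ℝ, (1 ≤ ∑ i, x i) → x j = 0 → (∀ i, i ≠ j → 0 ≤ x i) →
        (1 / 2 : ℝ) * ∑ i, (xhat i - a i) ^ 2 ≤ (1 / 2 : ℝ) * ∑ i, (x i - a i) ^ 2 := by
  subst hxhat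
  refine ⟨?_, by simp, fun i hi => by simp [hi, le_max_right], ?_⟩
  · rw [← Finset.sum_erase_add _ _ (Finset.mem_univ j), if_pos rfl, add_zero]
    refine le_trans hsum (le_of_eq ?_)
    exact Finset.sum_congr rfl fun i hi => (if_neg (Finset.ne_of_mem_erase hi)).symm
  · intro x _ hxj hxpos
    apply mul_le_mul_of_nonneg_left _ (by norm_num)
    apply Finset.sum_le_sum
    intro i _
    by_cases hi : i = j
    · subst hi; simp [hxj]
    · simp only [if_neg hi]
      have hx := hxpos i hi
      rcases le_or_gt 0 (a i) with h | h
      · rw [max_eq_left h]; nlinarith [sq_nonneg (x i - a i)]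
      · rw [max_eq_right h.le]
        have : (x i - a i) ^ 2 = x i ^ 2 + (-2 * a i) * x i + a i ^ 2 := by ring
        rw [this]
        nlinarith
end

section
/- Let a ∈ ℝ^N, fix j, and suppose Σ_{i≠j} max(a_i, 0) < 1. If φ ≥ 0 satisfies Σ_{i≠j} max(a_i + φ, 0) = 1, then the vector x̂ with x̂_j = 0 and x̂_i = max(a_i + φ, 0) for i ≠ j minimizes (1/2)‖x − a‖² over {x : xᵀ1 ≥ 1, x_j = 0, x_i ≥ 0 for i ≠ j}. -/
open Finset

theorem simplex_like_projection_case2 {N : ℕ} (a : Fin N → ℝ) (j : Fin N)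
    (hsum : ∑ i ∈ univ.erase j, max (a i) 0 < 1)
    (φ : ℝ) (hφ : 0 ≤ φ)
    (hφeq : ∑ i ∈ univ.erase j, max (a i + φ) 0 = 1)
    (xhat : Fin N → ℝ)
    (hxhat : xhat = fun i => if i = j then 0 else max (a i + φ) 0) :
    (1 ≤ ∑ i, xhat i) ∧ xhat j = 0 ∧ (∀ i, i ≠ j → 0 ≤ xhat i) ∧
      ∀ x : Fin N → ℝ, (1 ≤ ∑ i, x i) → x j = 0 → (∀ i, i ≠ j → 0 ≤ x i) →
        (1 / 2 : ℝ) * ∑ i, (xhat i - a i) ^ 2 ≤ (1 / 2 : ℝ) * ∑ i, (x i - a i) ^ 2 := by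
  subst hxhat
  have hj0 : (fun i => if i = j then 0 else max (a i + φ) 0) j = 0 := by simp
  have hsame : ∀ i ∈ univ.erase j,
      (fun i => if i = j then (0:ℝ) else max (a i + φ) 0) i = max (a i + φ) 0 := by
    intro i hi
    simp [Finset.ne_of_mem_erase hi]
  have herase : ∑ i ∈ univ.erase j,
      (fun i => if i = j then (0:ℝ) else max (a i + φ) 0) i = 1 := by
    rw [Finset.sum_congr rfl hsame]; exact hφeq
  have hsumtot : ∑ i, (fun i => if i = j then (0:ℝ) else max (a i + φ) 0) i = 1 := by
    rw [← Finset.add_sum_erase _ _ (Finset.mem_univ j)]; simpa using herase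
  refine ⟨le_of_eq hsumtot.symm, hj0, ?_, ?_⟩
  · intro i hi; simp [hi, le_max_right]
  · intro x hx1 hxj hxnn
    set f : Fin N → ℝ := fun i => if i = j then 0 else max (a i + φ) 0 with hf
    have key : ∀ i ∈ univ.erase j,
        (f i - a i)^2 + 2*φ*(x i - f i) ≤ (x i - a i)^2 := by
      intro i hi
      have hij : i ≠ j := Finset.ne_of_mem_erase hi
      have hfi : f i = max (a i + φ) 0 := by simp [hf, hij]
      have hxi : 0 ≤ x i := hxnn i hij
      rcases le_or_gt 0 (a i + φ) with h | h
      · rw [hfi, max_eq_left h]; nlinarith [sq_nonneg (x i - a i - φ)]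
      · rw [hfi, max_eq_right h.le]; nlinarith
    have hsumkey : ∑ i ∈ univ.erase j, ((f i - a i)^2 + 2*φ*(x i - f i))
        ≤ ∑ i ∈ univ.erase j, (x i - a i)^2 := Finset.sum_le_sum key
    have hxerase : ∑ i ∈ univ.erase j, x i = ∑ i, x i := by
      rw [← Finset.add_sum_erase _ _ (Finset.mem_univ j), hxj]; ring
    have hferase : ∑ i ∈ univ.erase j, f i = 1 := herase
    have hsplit : ∑ i ∈ univ.erase j, ((f i - a i)^2 + 2*φ*(x i - f i))
        = ∑ i ∈ univ.erase j, (f i - a i)^2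
          + 2*φ*(∑ i ∈ univ.erase j, x i - ∑ i ∈ univ.erase j, f i) := by
      rw [Finset.sum_add_distrib, ← Finset.mul_sum, Finset.sum_sub_distrib]
    have hnn : 0 ≤ 2*φ*(∑ i ∈ univ.erase j, x i - ∑ i ∈ univ.erase j, f i) := by
      rw [hxerase, hferase]
      have : (0:ℝ) ≤ ∑ i, x i - 1 := by linarith
      positivity
    have hA : ∑ i, (f i - a i)^2
        = (f j - a j)^2 + ∑ i ∈ univ.erase j, (f i - a i)^2 :=
      (Finset.add_sum_erase _ _ (Finset.mem_univ j)).symm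
    have hB : ∑ i, (x i - a i)^2
        = (x j - a j)^2 + ∑ i ∈ univ.erase j, (x i - a i)^2 :=
      (Finset.add_sum_erase _ _ (Finset.mem_univ j)).symm
    have hfj : f j = 0 := hj0
    rw [hA, hB, hfj, hxj]
    rw [hsplit] at hsumkey
    linarith
end

section
/- Let M be a symmetric N×N real matrix with eigendecomposition M = U Λ Uᵀ (U orthogonal, Λ diagonal), and let L > 0. Then Θ* = U · diag((λ_i + sqrt(λ_i² + 4/L))/2) · Uᵀ is symmetric positive definite and is the unique minimizer over symmetric positive definite Θ of −log det(Θ) + (L/2)‖Θ − M‖_F². -/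
open Matrix

noncomputable def frobNormSq {N : ℕ} (M : Matrix (Fin N) (Fin N) ℝ) : ℝ :=
  ∑ i : Fin N, ∑ j : Fin N, (M i j) ^ 2

section Helpers
variable {N : ℕ}

lemma conj_mul_conj (U : Matrix (Fin N) (Fin N) ℝ) (hU' : Uᵀ * U = 1) (d e : Fin N → ℝ) :
    (U * Matrix.diagonal d * Uᵀ) * (U * Matrix.diagonal e * Uᵀ)
      = U * Matrix.diagonal (fun i => d i * e i) * Uᵀ := by
  have : (U * Matrix.diagonal d * Uᵀ) * (U * Matrix.diagonal e * Uᵀ)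
      = U * (Matrix.diagonal d * (Uᵀ * U) * Matrix.diagonal e) * Uᵀ := by
    noncomm_ring
  rw [this, hU', mul_one, Matrix.diagonal_mul_diagonal]

lemma conj_isSymm (U : Matrix (Fin N) (Fin N) ℝ) (d : Fin N → ℝ) :
    (U * Matrix.diagonal d * Uᵀ).IsSymm := by
  unfold Matrix.IsSymm
  rw [Matrix.transpose_mul, Matrix.transpose_mul, Matrix.transpose_transpose,
    Matrix.diagonal_transpose, Matrix.mul_assoc]

lemma conj_trace (U : Matrix (Fin N) (Fin N) ℝ) (hU' : Uᵀ * U = 1) (d : Fin N → ℝ) :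
    (U * Matrix.diagonal d * Uᵀ).trace = ∑ i, d i := by
  rw [Matrix.trace_mul_cycle, hU', one_mul, Matrix.trace_diagonal]

lemma conj_det (U : Matrix (Fin N) (Fin N) ℝ) (hU' : Uᵀ * U = 1) (d : Fin N → ℝ) :
    (U * Matrix.diagonal d * Uᵀ).det = ∏ i, d i := by
  rw [Matrix.det_mul, Matrix.det_mul, mul_comm, ← mul_assoc, ← Matrix.det_mul, hU']
  simp

lemma conj_posDef (U : Matrix (Fin N) (Fin N) ℝ) (hU : U * Uᵀ = 1) (d : Fin N → ℝ)
    (hd : ∀ i, 0 < d i) : (U * Matrix.diagonal d * Uᵀ).PosDef := by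
  refine Matrix.posDef_iff_dotProduct_mulVec.mpr ⟨?_, fun v hv => ?_⟩
  · rw [Matrix.IsHermitian, Matrix.conjTranspose_eq_transpose_of_trivial]
    exact conj_isSymm U d
  · have hw : U *ᵥ (Uᵀ *ᵥ v) = v := by rw [Matrix.mulVec_mulVec, hU, Matrix.one_mulVec]
    set w := Uᵀ *ᵥ v with hwdef
    have hwne : w ≠ 0 := by
      intro h0
      apply hv
      rw [← hw, h0, Matrix.mulVec_zero]
    have hform : star v ⬝ᵥ (U * Matrix.diagonal d * Uᵀ) *ᵥ v = ∑ i, d i * (w i * w i) := by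
      rw [star_trivial, ← Matrix.mulVec_mulVec, ← Matrix.mulVec_mulVec,
        Matrix.dotProduct_mulVec, ← Matrix.mulVec_transpose]
      simp only [dotProduct, Matrix.mulVec_diagonal, ← hwdef]
      exact Finset.sum_congr rfl fun i _ => by ring
    rw [hform]
    obtain ⟨i, hi⟩ := Function.ne_iff.mp hwne
    exact Finset.sum_pos' (fun j _ => mul_nonneg (hd j).le (mul_self_nonneg _))
      ⟨i, Finset.mem_univ i, mul_pos (hd i) (mul_self_pos.mpr hi)⟩

lemma posDef_conj_symm {S Θ : Matrix (Fin N) (Fin N) ℝ} (hS : S.IsSymm)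
    (S' : Matrix (Fin N) (Fin N) ℝ) (hS' : S * S' = 1) (hΘ : Θ.PosDef) :
    (S * Θ * S).PosDef := by
  refine Matrix.posDef_iff_dotProduct_mulVec.mpr ⟨?_, fun v hv => ?_⟩
  · rw [Matrix.IsHermitian, Matrix.conjTranspose_eq_transpose_of_trivial,
      Matrix.transpose_mul, Matrix.transpose_mul, hS.eq,
      (hΘ.isHermitian.symm.trans (Matrix.conjTranspose_eq_transpose_of_trivial Θ)).symm,
      Matrix.mul_assoc]
  · have hwne : S *ᵥ v ≠ 0 := by
      intro h0
      apply hv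
      have h1 : S' *ᵥ (S *ᵥ v) = 0 := by rw [h0, Matrix.mulVec_zero]
      rw [Matrix.mulVec_mulVec, mul_eq_one_comm.mp hS', Matrix.one_mulVec] at h1
      exact h1
    have hform : star v ⬝ᵥ (S * Θ * S) *ᵥ v = star (S *ᵥ v) ⬝ᵥ Θ *ᵥ (S *ᵥ v) := by
      rw [star_trivial, star_trivial, ← Matrix.mulVec_mulVec, ← Matrix.mulVec_mulVec,
        Matrix.dotProduct_mulVec, ← Matrix.mulVec_transpose, hS.eq]
    rw [hform]
    exact hΘ.dotProduct_mulVec_pos hwne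

lemma trace_sub_log_det {B : Matrix (Fin N) (Fin N) ℝ} (hB : B.PosDef) :
    (N : ℝ) ≤ B.trace - Real.log B.det := by
  have hH := hB.isHermitian
  have hev : ∀ i, 0 < hH.eigenvalues i := hB.eigenvalues_pos
  have hdet : B.det = ∏ i, hH.eigenvalues i := by
    simpa using hH.det_eq_prod_eigenvalues
  have htr : B.trace = ∑ i, hH.eigenvalues i := by
    conv_lhs => rw [hH.spectral_theorem]
    rw [Unitary.conjStarAlgAut_apply, Matrix.trace_mul_cycle]
    rw [show (star (hH.eigenvectorUnitary : Matrix (Fin N) (Fin N) ℝ)) *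
        (hH.eigenvectorUnitary : Matrix (Fin N) (Fin N) ℝ) = 1 from
      Unitary.coe_star_mul_self _, one_mul, Matrix.trace_diagonal]
    simp
  have hlog : Real.log B.det = ∑ i, Real.log (hH.eigenvalues i) := by
    rw [hdet, Real.log_prod]
    exact fun i _ => (hev i).ne'
  rw [htr, hlog, ← Finset.sum_sub_distrib]
  have hN : (N : ℝ) = ∑ _i : Fin N, (1 : ℝ) := by simp
  rw [hN]
  exact Finset.sum_le_sum fun i _ => by
    have := Real.log_le_sub_one_of_pos (hev i)
    linarith

lemma dotF_eq_trace (A C : Matrix (Fin N) (Fin N) ℝ) :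
    (∑ i, ∑ j, A i j * C i j) = (Aᵀ * C).trace := by
  rw [Matrix.trace]
  simp only [Matrix.diag_apply, Matrix.mul_apply, Matrix.transpose_apply]
  exact Finset.sum_comm

lemma frob_expand (A C : Matrix (Fin N) (Fin N) ℝ) :
    frobNormSq (A + C) = frobNormSq A + 2 * (∑ i, ∑ j, A i j * C i j) + frobNormSq C := by
  simp only [frobNormSq, Matrix.add_apply, Finset.mul_sum]
  rw [← Finset.sum_add_distrib, ← Finset.sum_add_distrib]
  refine Finset.sum_congr rfl fun i _ => ?_
  rw [← Finset.sum_add_distrib, ← Finset.sum_add_distrib]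
  exact Finset.sum_congr rfl fun j _ => by ring

lemma frob_nonneg (A : Matrix (Fin N) (Fin N) ℝ) : 0 ≤ frobNormSq A :=
  Finset.sum_nonneg fun i _ => Finset.sum_nonneg fun j _ => sq_nonneg _

lemma frob_eq_zero {A : Matrix (Fin N) (Fin N) ℝ} (hA : frobNormSq A = 0) : A = 0 := by
  ext i j
  have h1 := (Finset.sum_eq_zero_iff_of_nonneg (fun i _ =>
    Finset.sum_nonneg fun j _ => sq_nonneg (A i j))).mp hA i (Finset.mem_univ i)
  have h2 := (Finset.sum_eq_zero_iff_of_nonneg (fun j _ => sq_nonneg (A i j))).mp h1 j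
    (Finset.mem_univ j)
  simpa using pow_eq_zero_iff two_ne_zero |>.mp h2

end Helpers

theorem theta_update_closed_form {N : ℕ}
    (M U : Matrix (Fin N) (Fin N) ℝ) (lam : Fin N → ℝ)
    (hM : M.IsSymm) (hU : U * Uᵀ = 1) (hU' : Uᵀ * U = 1)
    (hdecomp : M = U * Matrix.diagonal lam * Uᵀ)
    (L : ℝ) (hL : 0 < L)
    (Θstar : Matrix (Fin N) (Fin N) ℝ)
    (hΘstar : Θstar =
      U * Matrix.diagonal (fun i => (lam i + Real.sqrt ((lam i) ^ 2 + 4 / L)) / 2) * Uᵀ)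
    (h : Matrix (Fin N) (Fin N) ℝ → ℝ)
    (hh : h = fun Θ => -Real.log Θ.det + (L / 2) * frobNormSq (Θ - M)) :
    Θstar.IsSymm ∧ Θstar.PosDef ∧
      (∀ Θ : Matrix (Fin N) (Fin N) ℝ, Θ.IsSymm → Θ.PosDef → h Θstar ≤ h Θ) ∧
      (∀ Θ : Matrix (Fin N) (Fin N) ℝ, Θ.IsSymm → Θ.PosDef → h Θ = h Θstar → Θ = Θstar) := by
  set x : Fin N → ℝ := fun i => (lam i + Real.sqrt ((lam i) ^ 2 + 4 / L)) / 2 with hxdef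
  -- positivity of x
  have hx : ∀ i, 0 < x i := by
    intro i
    have h1 : |lam i| < Real.sqrt ((lam i) ^ 2 + 4 / L) := by
      rw [← Real.sqrt_sq_eq_abs]
      refine Real.sqrt_lt_sqrt (sq_nonneg _) ?_
      have h4 : (0:ℝ) < 4 / L := by positivity
      linarith
    have h2 : -lam i ≤ |lam i| := neg_le_abs _
    simp only [hxdef]
    linarith
  -- the quadratic identity
  have hxm : ∀ i, x i * (x i - lam i) = 1 / L := by
    intro i
    have hsq : Real.sqrt ((lam i) ^ 2 + 4 / L) ^ 2 = (lam i) ^ 2 + 4 / L :=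
      Real.sq_sqrt (by positivity)
    have : x i * (x i - lam i) = (Real.sqrt ((lam i) ^ 2 + 4 / L) ^ 2 - (lam i) ^ 2) / 4 := by
      simp only [hxdef]; ring
    rw [this, hsq]
    field_simp
    ring
  have hLx : ∀ i, L * (x i - lam i) = (x i)⁻¹ := by
    intro i
    have h1 := hxm i
    have h2 := (hx i).ne'
    field_simp at h1 ⊢
    nlinarith [h1]
  -- matrices
  set y : Fin N → ℝ := fun i => (Real.sqrt (x i))⁻¹ with hydef
  have hy : ∀ i, 0 < y i := fun i => inv_pos.mpr (Real.sqrt_pos.mpr (hx i))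
  have hyy : ∀ i, y i * y i = (x i)⁻¹ := by
    intro i
    simp only [hydef]
    rw [← mul_inv, Real.mul_self_sqrt (hx i).le]
  set P : Matrix (Fin N) (Fin N) ℝ := U * Matrix.diagonal (fun i => (x i)⁻¹) * Uᵀ with hPdef
  set S : Matrix (Fin N) (Fin N) ℝ := U * Matrix.diagonal y * Uᵀ with hSdef
  have hSS : S * S = P := by
    rw [hSdef, conj_mul_conj U hU', hPdef,
      show (fun i => y i * y i) = (fun i => (x i)⁻¹) from funext hyy]
  have hΘP : Θstar * P = 1 := by
    rw [hΘstar, hPdef, conj_mul_conj U hU']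
    have : (fun i => x i * (x i)⁻¹) = fun _ => (1 : ℝ) :=
      funext fun i => mul_inv_cancel₀ (hx i).ne'
    rw [show (fun i => (lam i + Real.sqrt ((lam i) ^ 2 + 4 / L)) / 2) = x from rfl] at *
    rw [this, Matrix.diagonal_one, mul_one, hU]
  have hsymmΘstar : Θstar.IsSymm := hΘstar ▸ conj_isSymm U _
  have hpdΘstar : Θstar.PosDef := hΘstar ▸ conj_posDef U hU x hx
  have hdetΘstar : Θstar.det = ∏ i, x i := hΘstar ▸ conj_det U hU' x
  have hdetΘstar_pos : 0 < Θstar.det := hpdΘstar.det_pos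
  -- stationarity: L • (Θstar - M) = P
  have hstat : L • (Θstar - M) = P := by
    have h1 : Θstar - M = U * Matrix.diagonal (fun i => x i - lam i) * Uᵀ := by
      rw [hΘstar, hdecomp, ← Matrix.sub_mul, ← Matrix.mul_sub, Matrix.diagonal_sub]
    have hds : Matrix.diagonal (fun i => (x i)⁻¹)
        = L • Matrix.diagonal (fun i => x i - lam i) := by
      ext i j
      rcases eq_or_ne i j with rfl | hij
      · simp [Matrix.diagonal_apply_eq, Matrix.smul_apply, smul_eq_mul, ← hLx i]
      · simp [Matrix.diagonal_apply_ne _ hij, Matrix.smul_apply]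
    rw [h1, hPdef, hds, Matrix.mul_smul, Matrix.smul_mul]
  -- key inequality
  have key : ∀ Θ : Matrix (Fin N) (Fin N) ℝ, Θ.IsSymm → Θ.PosDef →
      h Θstar + (L / 2) * frobNormSq (Θ - Θstar) ≤ h Θ := by
    intro Θ hΘs hΘpd
    set B : Matrix (Fin N) (Fin N) ℝ := S * Θ * S with hBdef
    have hSsymm : S.IsSymm := hSdef ▸ conj_isSymm U y
    have hS'S : S * (U * Matrix.diagonal (fun i => (y i)⁻¹) * Uᵀ) = 1 := by
      rw [hSdef, conj_mul_conj U hU',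
        show (fun i => y i * (y i)⁻¹) = fun _ => (1 : ℝ) from
          funext fun i => mul_inv_cancel₀ (hy i).ne',
        Matrix.diagonal_one, mul_one, hU]
    have hBpd : B.PosDef := posDef_conj_symm hSsymm _ hS'S hΘpd
    have htraceB : B.trace = (Θ * P).trace := by
      rw [hBdef, Matrix.trace_mul_comm (S * Θ) S, ← Matrix.mul_assoc, hSS,
        Matrix.trace_mul_comm P Θ]
    have hdetB : B.det = Θ.det * (Θstar.det)⁻¹ := by
      have hsq : B.det = Θ.det * (S * S).det := by
        rw [hBdef, Matrix.det_mul, Matrix.det_mul, Matrix.det_mul S S,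
          mul_comm S.det Θ.det, mul_assoc]
      rw [hsq, hSS, hPdef, conj_det U hU', hdetΘstar, ← Finset.prod_inv_distrib]
    have hdetΘpos : 0 < Θ.det := hΘpd.det_pos
    have hlogB : Real.log B.det = Real.log Θ.det - Real.log Θstar.det := by
      rw [hdetB, Real.log_mul hdetΘpos.ne' (inv_ne_zero hdetΘstar_pos.ne'), Real.log_inv]
      ring
    have hq : frobNormSq (Θ - M) = frobNormSq (Θ - Θstar)
        + 2 * (((Θ - Θstar)ᵀ * (Θstar - M)).trace) + frobNormSq (Θstar - M) := by
      rw [show Θ - M = (Θ - Θstar) + (Θstar - M) from (sub_add_sub_cancel _ _ _).symm,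
        frob_expand, dotF_eq_trace]
    have hΔsymm : (Θ - Θstar)ᵀ = Θ - Θstar := by
      rw [Matrix.transpose_sub, hΘs, hsymmΘstar]
    have hcross : L * ((Θ - Θstar)ᵀ * (Θstar - M)).trace = B.trace - N := by
      rw [hΔsymm]
      have h2 : L * ((Θ - Θstar) * (Θstar - M)).trace
          = ((Θ - Θstar) * (L • (Θstar - M))).trace := by
        rw [Matrix.mul_smul, Matrix.trace_smul, smul_eq_mul]
      rw [h2, hstat, Matrix.sub_mul, Matrix.trace_sub, ← htraceB, hΘP, Matrix.trace_one]
      simp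
    have hkey : h Θ = h Θstar + (B.trace - (N : ℝ) - Real.log B.det)
        + (L / 2) * frobNormSq (Θ - Θstar) := by
      have e1 : h Θ = -Real.log Θ.det + (L / 2) * frobNormSq (Θ - M) := by rw [hh]
      have e2 : h Θstar = -Real.log Θstar.det + (L / 2) * frobNormSq (Θstar - M) := by
        rw [hh]
      rw [e1, e2, hq, hlogB]
      linear_combination hcross
    have hB := trace_sub_log_det hBpd
    linarith
  refine ⟨hsymmΘstar, hpdΘstar, fun Θ hs hpd => ?_, fun Θ hs hpd heq => ?_⟩
  · have h1 := key Θ hs hpd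
    have h2 := frob_nonneg (Θ - Θstar)
    nlinarith
  · have h1 := key Θ hs hpd
    have h2 := frob_nonneg (Θ - Θstar)
    have h3 : frobNormSq (Θ - Θstar) = 0 := by nlinarith
    have h4 : Θ - Θstar = 0 := frob_eq_zero h3
    exact sub_eq_zero.mp h4
end
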